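/- Let λ < 0 and let a, c, d be real numbers with c < 0 < a, d ≥ 0, satisfying 1 + λ² + a·c − c² = 0. Set ρ₁ = (√(4c(2c−a)+d²)+d)/2 and ρ₂ = (√(4c(2c−a)+d²)−d)/2, and define y : ℝ² → ℂ³ by y(v,w) = ( √((λ²+1)/((c−a)(2c−a)))·e^{i(c−a)v}, √((λ²+1)/(ρ₁(ρ₁+ρ₂)))·e^{−i(cv+ρ₁w)}, √((λ²+1)/(ρ₂(ρ₁+ρ₂)))·e^{−i(cv−ρ₂w)} ). Then for every (v,w): ‖y(v,w)‖ = 1, ⟨∂y/∂v, i·y⟩_ℝ = 0, and ⟨∂y/∂w, i·y⟩_ℝ = 0; i.e. y is a Legendrian surface in the unit sphere S⁵ ⊂ ℂ³. -/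

import Mathlib

open scoped ComplexInnerProductSpace

open Complex ComplexConjugate

/-!
Along either coordinate line, `y` is a curve `t ↦ (r_k e^{i(α_k t + β_k)})_k` whose coordinates
have constant moduli and affine phases. For such a curve `‖y‖² = ∑ r_k²` and
`Re⟪y', i y⟫ = ∑ α_k r_k²`, so the three claims become linear identities in the weights
`q_k = r_k²`. They follow from `λ² + 1 = c(c - a)` and `ρ₁ρ₂ = c(2c - a)` (`ρ₁` and `-ρ₂` are the
roots of `x² - d x - c(2c - a)`), which give `q₀ = c/(2c - a)`, `q₁ + q₂ = (c - a)/(2c - a)` and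
`ρ₁q₁ = ρ₂q₂`.
-/

noncomputable def phaseCurve {ι : Type*} (r α β : ι → ℝ) (t : ℝ) : EuclideanSpace ℂ ι :=
  WithLp.toLp 2 fun k => (r k : ℂ) * exp (I * ((α k * t + β k : ℝ) : ℂ))

section phaseCurve

variable {ι : Type*} (r α β : ι → ℝ) (t : ℝ)

theorem norm_phaseCurve_apply (k : ι) : ‖phaseCurve r α β t k‖ = |r k| := by
  rw [phaseCurve, PiLp.toLp_apply, norm_mul, norm_exp_I_mul_ofReal, mul_one, norm_real,
    Real.norm_eq_abs]

variable [Fintype ι]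

theorem norm_phaseCurve_sq : ‖phaseCurve r α β t‖ ^ 2 = ∑ k, r k ^ 2 := by
  simp only [EuclideanSpace.norm_sq_eq, norm_phaseCurve_apply, sq_abs]

theorem hasDerivAt_phaseCurve :
    HasDerivAt (phaseCurve r α β) (WithLp.toLp 2 fun k => I * α k * phaseCurve r α β t k) t := by
  have hcoord : HasDerivAt (fun s k => (r k : ℂ) * exp (I * ((α k * s + β k : ℝ) : ℂ)))
      (fun k => I * α k * phaseCurve r α β t k) t := by
    refine hasDerivAt_pi.2 fun k => ?_
    have hphase : HasDerivAt (fun s : ℝ => α k * s + β k) (α k) t := by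
      simpa using ((hasDerivAt_id' t).const_mul (α k)).add_const (β k)
    exact ((hphase.ofReal_comp.const_mul I).cexp.const_mul (r k : ℂ)).congr_deriv
      (by rw [phaseCurve, PiLp.toLp_apply]; ring)
  exact (PiLp.hasFDerivAt_toLp 2 _).comp_hasDerivAt t hcoord

theorem re_inner_deriv_phaseCurve_I_smul :
    (⟪deriv (phaseCurve r α β) t, I • phaseCurve r α β t⟫).re = ∑ k, α k * r k ^ 2 := by
  rw [(hasDerivAt_phaseCurve r α β t).deriv, PiLp.inner_apply, re_sum]
  congr 1 with k
  set z := phaseCurve r α β t k with hz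
  have hrot : ⟪I * α k * z, I • z⟫ = α k * (conj z * z) := by
    rw [RCLike.inner_apply, smul_eq_mul, map_mul, map_mul, conj_I, conj_ofReal]
    linear_combination (-α k * conj z * z) * I_sq
  rw [PiLp.toLp_apply, PiLp.smul_apply, hrot, conj_mul', hz, norm_phaseCurve_apply,
    ← ofReal_pow, ← ofReal_mul, ofReal_re, sq_abs]

end phaseCurve

theorem half_sqrt_add_sub_pos_and_mul {p d ρ₁ ρ₂ : ℝ} (hp : 0 < p)
    (hρ₁ : ρ₁ = (√(4 * p + d ^ 2) + d) / 2) (hρ₂ : ρ₂ = (√(4 * p + d ^ 2) - d) / 2) :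
    0 < ρ₁ ∧ 0 < ρ₂ ∧ ρ₁ * ρ₂ = p := by
  have hs : √(4 * p + d ^ 2) ^ 2 = 4 * p + d ^ 2 := Real.sq_sqrt (by positivity)
  have hd : |d| < √(4 * p + d ^ 2) := by
    rw [← Real.sqrt_sq_eq_abs]
    exact Real.sqrt_lt_sqrt (sq_nonneg d) (by linarith)
  subst hρ₁ hρ₂
  exact ⟨by linarith [neg_abs_le d], by linarith [le_abs_self d], by linear_combination hs / 4⟩

/-- The squared moduli of the coordinates of `y`, with `P` standing for `λ² + 1`. -/
noncomputable def legendrianWeights (P a c ρ₁ ρ₂ : ℝ) : Fin 3 → ℝ :=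
  ![P / ((c - a) * (2 * c - a)), P / (ρ₁ * (ρ₁ + ρ₂)), P / (ρ₂ * (ρ₁ + ρ₂))]

section legendrianWeights

variable {P a c ρ₁ ρ₂ : ℝ}

theorem legendrianWeights_nonneg (hP : P = c * (c - a)) (hP₀ : 0 < P) (h₁ : 0 < ρ₁) (h₂ : 0 < ρ₂)
    (k : Fin 3) : 0 ≤ legendrianWeights P a c ρ₁ ρ₂ k := by
  have : 0 < (c - a) * (2 * c - a) := by nlinarith [sq_nonneg (c - a)]
  fin_cases k <;>
    simp only [legendrianWeights, Fin.zero_eta, Fin.mk_one, Fin.reduceFinMk, Matrix.cons_val] <;>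
    positivity

theorem legendrianWeights_zero (hP : P = c * (c - a)) (hca : c - a ≠ 0) :
    legendrianWeights P a c ρ₁ ρ₂ 0 = c / (2 * c - a) := by
  rw [legendrianWeights, Matrix.cons_val_zero, hP, mul_comm c, mul_div_mul_left _ _ hca]

theorem legendrianWeights_one_add_two (hP : P = c * (c - a)) (hρ : ρ₁ * ρ₂ = c * (2 * c - a))
    (h₁ : 0 < ρ₁) (h₂ : 0 < ρ₂) :
    legendrianWeights P a c ρ₁ ρ₂ 1 + legendrianWeights P a c ρ₁ ρ₂ 2 = (c - a) / (2 * c - a) := by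
  have hc : c ≠ 0 := by rintro rfl; nlinarith [mul_pos h₁ h₂]
  calc legendrianWeights P a c ρ₁ ρ₂ 1 + legendrianWeights P a c ρ₁ ρ₂ 2 = P / (ρ₁ * ρ₂) := by
        show P / (ρ₁ * (ρ₁ + ρ₂)) + P / (ρ₂ * (ρ₁ + ρ₂)) = _
        field_simp
        ring
    _ = (c - a) / (2 * c - a) := by rw [hP, hρ, mul_div_mul_left _ _ hc]

theorem sum_legendrianWeights (hP : P = c * (c - a)) (hP₀ : 0 < P)
    (hρ : ρ₁ * ρ₂ = c * (2 * c - a)) (h₁ : 0 < ρ₁) (h₂ : 0 < ρ₂) :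
    ∑ k, legendrianWeights P a c ρ₁ ρ₂ k = 1 := by
  have hca : c - a ≠ 0 := by rintro h; rw [h, mul_zero] at hP; linarith
  have h2ca : 2 * c - a ≠ 0 := by rintro h; rw [h, mul_zero] at hρ; nlinarith [mul_pos h₁ h₂]
  rw [Fin.sum_univ_three, add_assoc, legendrianWeights_zero hP hca,
    legendrianWeights_one_add_two hP hρ h₁ h₂, ← add_div, div_eq_one_iff_eq h2ca]
  ring

theorem sum_mul_legendrianWeights_v (hP : P = c * (c - a)) (hP₀ : 0 < P)
    (hρ : ρ₁ * ρ₂ = c * (2 * c - a)) (h₁ : 0 < ρ₁) (h₂ : 0 < ρ₂) :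
    ∑ k, ![c - a, -c, -c] k * legendrianWeights P a c ρ₁ ρ₂ k = 0 := by
  have hca : c - a ≠ 0 := by rintro h; rw [h, mul_zero] at hP; linarith
  have h0 := legendrianWeights_zero (ρ₁ := ρ₁) (ρ₂ := ρ₂) hP hca
  have h12 := legendrianWeights_one_add_two hP hρ h₁ h₂
  simp only [Fin.sum_univ_three, Matrix.cons_val_zero, Matrix.cons_val_one, Matrix.cons_val_two,
    Matrix.head_cons, Matrix.tail_cons]
  linear_combination (c - a) * h0 - c * h12

theorem sum_mul_legendrianWeights_w (h₁ : 0 < ρ₁) (h₂ : 0 < ρ₂) :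
    ∑ k, ![0, -ρ₁, ρ₂] k * legendrianWeights P a c ρ₁ ρ₂ k = 0 := by
  rw [Fin.sum_univ_three]
  show 0 * _ + -ρ₁ * (P / (ρ₁ * (ρ₁ + ρ₂))) + ρ₂ * (P / (ρ₂ * (ρ₁ + ρ₂))) = 0
  field_simp
  ring

end legendrianWeights

theorem stmt_12_general (lam a c d : ℝ)
    (hrel : 1 + lam^2 + a*c - c^2 = 0)
    (ρ₁ ρ₂ : ℝ)
    (hρ₁ : ρ₁ = (Real.sqrt (4*c*(2*c - a) + d^2) + d)/2)
    (hρ₂ : ρ₂ = (Real.sqrt (4*c*(2*c - a) + d^2) - d)/2)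
    (y : ℝ → ℝ → EuclideanSpace ℂ (Fin 3))
    (hy : ∀ v w : ℝ, y v w = (WithLp.equiv 2 (Fin 3 → ℂ)).symm
      ![((Real.sqrt ((lam^2 + 1)/((c - a)*(2*c - a))) : ℝ) : ℂ)
          * Complex.exp (Complex.I * (((c - a)*v : ℝ) : ℂ)),
        ((Real.sqrt ((lam^2 + 1)/(ρ₁*(ρ₁ + ρ₂))) : ℝ) : ℂ)
          * Complex.exp (-Complex.I * ((c*v + ρ₁*w : ℝ) : ℂ)),
        ((Real.sqrt ((lam^2 + 1)/(ρ₂*(ρ₁ + ρ₂))) : ℝ) : ℂ)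
          * Complex.exp (-Complex.I * ((c*v - ρ₂*w : ℝ) : ℂ))]) :
    ∀ v w : ℝ, ‖y v w‖ = 1 ∧
      (⟪deriv (fun t => y t w) v, Complex.I • y v w⟫).re = 0 ∧
      (⟪deriv (fun t => y v t) w, Complex.I • y v w⟫).re = 0 := by
  have hP : lam ^ 2 + 1 = c * (c - a) := by linarith
  have hP₀ : 0 < lam ^ 2 + 1 := by positivity
  rw [mul_assoc] at hρ₁ hρ₂
  obtain ⟨h₁, h₂, hρ⟩ := half_sqrt_add_sub_pos_and_mul (by nlinarith) hρ₁ hρ₂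
  set q := legendrianWeights (lam ^ 2 + 1) a c ρ₁ ρ₂
  have hr (k : Fin 3) : √(q k) ^ 2 = q k := Real.sq_sqrt (legendrianWeights_nonneg hP hP₀ h₁ h₂ k)
  have hy' (v w : ℝ) :
      y v w = phaseCurve (fun k => √(q k)) ![c - a, -c, -c] ![0, -(ρ₁ * w), ρ₂ * w] v ∧
      y v w = phaseCurve (fun k => √(q k)) ![0, -ρ₁, ρ₂] ![(c - a) * v, -(c * v), -(c * v)] w := by
    rw [hy]
    constructor <;> ext k <;> fin_cases k <;>
      simp only [WithLp.equiv_symm_apply, PiLp.toLp_apply, phaseCurve, q, legendrianWeights,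
        Fin.zero_eta, Fin.mk_one, Fin.reduceFinMk, Matrix.cons_val] <;>
      congr 2 <;> push_cast <;> ring
  intro v w
  refine ⟨?_, ?_, ?_⟩
  · refine (pow_eq_one_iff_of_nonneg (norm_nonneg _) two_ne_zero).1 ?_
    rw [(hy' v w).1, norm_phaseCurve_sq]
    simp only [hr]
    exact sum_legendrianWeights hP hP₀ hρ h₁ h₂
  · rw [funext fun t => (hy' t w).1, (hy' v w).1]
    simp only [re_inner_deriv_phaseCurve_I_smul, hr]
    exact sum_mul_legendrianWeights_v hP hP₀ hρ h₁ h₂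
  · rw [funext fun t => (hy' v t).2]
    simp only [re_inner_deriv_phaseCurve_I_smul, hr]
    exact sum_mul_legendrianWeights_w h₁ h₂

/-- the surface y(v,w) built from (λ,a,c,d) is a Legendrian surface in S⁵ ⊂ ℂ³. -/
theorem stmt_12 (lam a c d : ℝ) (hlam : lam < 0)
    (hc : c < 0) (ha : 0 < a) (hd : 0 ≤ d)
    (hrel : 1 + lam^2 + a*c - c^2 = 0)
    (ρ₁ ρ₂ : ℝ)
    (hρ₁ : ρ₁ = (Real.sqrt (4*c*(2*c - a) + d^2) + d)/2)
    (hρ₂ : ρ₂ = (Real.sqrt (4*c*(2*c - a) + d^2) - d)/2)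
    (y : ℝ → ℝ → EuclideanSpace ℂ (Fin 3))
    (hy : ∀ v w : ℝ, y v w = (WithLp.equiv 2 (Fin 3 → ℂ)).symm
      ![((Real.sqrt ((lam^2 + 1)/((c - a)*(2*c - a))) : ℝ) : ℂ)
          * Complex.exp (Complex.I * (((c - a)*v : ℝ) : ℂ)),
        ((Real.sqrt ((lam^2 + 1)/(ρ₁*(ρ₁ + ρ₂))) : ℝ) : ℂ)
          * Complex.exp (-Complex.I * ((c*v + ρ₁*w : ℝ) : ℂ)),
        ((Real.sqrt ((lam^2 + 1)/(ρ₂*(ρ₁ + ρ₂))) : ℝ) : ℂ)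
          * Complex.exp (-Complex.I * ((c*v - ρ₂*w : ℝ) : ℂ))]) :
    ∀ v w : ℝ, ‖y v w‖ = 1 ∧
      (⟪deriv (fun t => y t w) v, Complex.I • y v w⟫).re = 0 ∧
      (⟪deriv (fun t => y v t) w, Complex.I • y v w⟫).re = 0 :=
  stmt_12_general lam a c d hrel ρ₁ ρ₂ hρ₁ hρ₂ y hy
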